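/- arXiv:1408.5534 — 6 statements merged into one kernel-verified Lean document; each statement's English description precedes it below -/
import Mathlib

section
/- Euclidean sagitta identity on the boundary circle (k = 0 case of Proposition 1.2, part 1): let E be a real inner product space, a ∈ E, r > 0, and let q ∈ E satisfy ‖q − a‖ = r. Let t ∈ [−1, 1] and set p = a + t·(q − a) (so p lies in the closed ball of radius r about a, on the line through a and q). Then for every x ∈ E with ‖x − a‖ = r and x ≠ q, (‖p − x‖² − ‖p − q‖²) / ‖q − x‖² = (r − ‖p − q‖)/r. -/
/-! Along the line `p = a + t • (q - a)`, the quantity `‖p - x‖² - ‖p - q‖²` is affine in `t`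
(the quadratic terms in `p` cancel); it vanishes at `t = 0` because `x` and `q` are equidistant
from `a`, and equals `‖q - x‖²` at `t = 1`. Hence the left side is `t`, and so is the right side,
since `‖p - q‖ = (1 - t) r` for `t ≤ 1`. -/

section

variable {E : Type*} [NormedAddCommGroup E] [InnerProductSpace ℝ E]

theorem norm_add_smul_sub_sq_sub_sq_of_norm_eq {a q x : E} (hx : ‖x - a‖ = ‖q - a‖) (t : ℝ) :
    ‖a + t • (q - a) - x‖ ^ 2 - ‖a + t • (q - a) - q‖ ^ 2 = t * ‖q - x‖ ^ 2 := by
  have hpx : a + t • (q - a) - x = t • (q - a) - (x - a) := by abel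
  have hpq : a + t • (q - a) - q = t • (q - a) - (q - a) := by abel
  have hqx : q - x = (q - a) - (x - a) := by abel
  rw [hpx, hpq, hqx]
  generalize q - a = u at hx ⊢
  generalize x - a = v at hx ⊢
  simp only [norm_sub_sq_real, real_inner_smul_left, real_inner_self_eq_norm_sq, hx]
  ring

theorem norm_add_smul_sub_right_of_le_one (a q : E) {t : ℝ} (ht : t ≤ 1) :
    ‖a + t • (q - a) - q‖ = (1 - t) * ‖q - a‖ := by
  rw [show a + t • (q - a) - q = (1 - t) • (a - q) by module, norm_smul,
    Real.norm_of_nonneg (sub_nonneg.mpr ht), norm_sub_rev]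

end

/-- Euclidean sagitta identity on the boundary circle (`k = 0` case): if
`‖q − a‖ = r`, `p = a + t(q − a)` with `t ∈ [−1,1]`, then for every `x` with
`‖x − a‖ = r` and `x ≠ q`, `(‖p − x‖² − ‖p − q‖²)/‖q − x‖² = (r − ‖p − q‖)/r`. -/
theorem euclidean_sagitta_identity {E : Type*} [NormedAddCommGroup E]
    [InnerProductSpace ℝ E] (a q : E) (r : ℝ) (hr : 0 < r) (hq : ‖q - a‖ = r)
    (t : ℝ) (ht : t ∈ Set.Icc (-1 : ℝ) 1) (p : E) (hp : p = a + t • (q - a))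
    (x : E) (hx : ‖x - a‖ = r) (hxq : x ≠ q) :
    (‖p - x‖ ^ 2 - ‖p - q‖ ^ 2) / ‖q - x‖ ^ 2 = (r - ‖p - q‖) / r := by
  have hqx : ‖q - x‖ ≠ 0 := norm_ne_zero_iff.mpr (sub_ne_zero.mpr hxq.symm)
  subst hp
  rw [norm_add_smul_sub_sq_sub_sq_of_norm_eq (hx.trans hq.symm),
    norm_add_smul_sub_right_of_le_one a q ht.2, hq]
  field_simp
  ring
end

section
/- Euclidean sagitta inequalities inside and outside the circle (k = 0 case of Proposition 1.2, part 2): let E be a real inner product space, a ∈ E, r > 0, q ∈ E with ‖q − a‖ = r, t ∈ [−1, 1) and p = a + t·(q − a) (so p ≠ q lies in the closed ball of radius r about a on the line through a and q). Then: (i) for every x with ‖x − a‖ < r and x ≠ q, (‖p − x‖² − ‖p − q‖²)/‖q − x‖² < (r − ‖p − q‖)/r; and (ii) for every x with ‖x − a‖ > r, (‖p − x‖² − ‖p − q‖²)/‖q − x‖² > (r − ‖p − q‖)/r. -/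
/-!
With `p = a + t • (q - a)`, expanding squared norms gives the identity
`‖p - x‖² - ‖p - q‖² = t ‖q - x‖² + (1 - t) (‖x - a‖² - ‖q - a‖²)`, and `‖p - q‖ = (1 - t) r`
makes the right-hand side of both inequalities equal to `t`. Dividing the identity by
`‖q - x‖²`, the ratio exceeds `t` by `(1 - t)(‖x - a‖² - r²) / ‖q - x‖²`, whose sign is that
of `‖x - a‖ - r` since `t < 1`.
-/

section

variable {F : Type*} [NormedAddCommGroup F] [InnerProductSpace ℝ F]

theorem norm_smul_add_one_sub_smul_sq (t : ℝ) (u w : F) :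
    ‖t • u + (1 - t) • w‖ ^ 2 =
      t * ‖u‖ ^ 2 + (1 - t) * ‖w‖ ^ 2 - t * (1 - t) * ‖u - w‖ ^ 2 := by
  rw [norm_add_sq_real, norm_sub_sq_real, norm_smul, norm_smul, real_inner_smul_left,
    real_inner_smul_right, mul_pow, mul_pow, Real.norm_eq_abs, Real.norm_eq_abs, sq_abs, sq_abs]
  ring

theorem norm_add_smul_sub_sub_sq (a q x : F) (t : ℝ) :
    ‖a + t • (q - a) - x‖ ^ 2 =
      t * ‖q - x‖ ^ 2 + (1 - t) * ‖a - x‖ ^ 2 - t * (1 - t) * ‖q - a‖ ^ 2 := by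
  have h := norm_smul_add_one_sub_smul_sq t (q - x) (a - x)
  rwa [sub_sub_sub_cancel_right,
    show t • (q - x) + (1 - t) • (a - x) = a + t • (q - a) - x by module] at h

theorem norm_add_smul_sub_sub_sq_sub_norm_add_smul_sub_sub_sq (a q x : F) (t : ℝ) :
    ‖a + t • (q - a) - x‖ ^ 2 - ‖a + t • (q - a) - q‖ ^ 2 =
      t * ‖q - x‖ ^ 2 + (1 - t) * (‖x - a‖ ^ 2 - ‖q - a‖ ^ 2) := by
  rw [norm_add_smul_sub_sub_sq, norm_add_smul_sub_sub_sq, sub_self, norm_zero, norm_sub_rev a x,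
    norm_sub_rev a q]
  ring

theorem norm_add_smul_sub_sub_right {t : ℝ} (ht : t ≤ 1) (a q : F) :
    ‖a + t • (q - a) - q‖ = (1 - t) * ‖q - a‖ := by
  rw [show a + t • (q - a) - q = (1 - t) • (a - q) by module, norm_smul,
    Real.norm_of_nonneg (sub_nonneg.2 ht), norm_sub_rev]

theorem div_norm_sub_sq_add_smul_sub_eq {a q x : F} (hxq : x ≠ q) (t : ℝ) :
    (‖a + t • (q - a) - x‖ ^ 2 - ‖a + t • (q - a) - q‖ ^ 2) / ‖q - x‖ ^ 2 =
      t + (1 - t) * (‖x - a‖ ^ 2 - ‖q - a‖ ^ 2) / ‖q - x‖ ^ 2 := by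
  have hqx : ‖q - x‖ ^ 2 ≠ 0 := pow_ne_zero 2 (norm_ne_zero_iff.2 (sub_ne_zero.2 hxq.symm))
  rw [norm_add_smul_sub_sub_sq_sub_norm_add_smul_sub_sub_sq, add_div, mul_div_cancel_right₀ _ hqx]

theorem div_norm_sub_sq_add_smul_sub_lt_iff {a q x : F} (hxq : x ≠ q) {t : ℝ} (ht : t < 1) :
    (‖a + t • (q - a) - x‖ ^ 2 - ‖a + t • (q - a) - q‖ ^ 2) / ‖q - x‖ ^ 2 < t ↔
      ‖x - a‖ < ‖q - a‖ := by
  have hqx : 0 < ‖q - x‖ ^ 2 := by positivity [sub_ne_zero.2 hxq.symm]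
  rw [div_norm_sub_sq_add_smul_sub_eq hxq, add_lt_iff_neg_left, div_lt_iff₀ hqx, zero_mul,
    ← neg_pos, ← mul_neg, mul_pos_iff_of_pos_left (sub_pos.2 ht), neg_pos, sub_neg,
    pow_lt_pow_iff_left₀ (norm_nonneg _) (norm_nonneg _) two_ne_zero]

theorem lt_div_norm_sub_sq_add_smul_sub_iff {a q x : F} (hxq : x ≠ q) {t : ℝ} (ht : t < 1) :
    t < (‖a + t • (q - a) - x‖ ^ 2 - ‖a + t • (q - a) - q‖ ^ 2) / ‖q - x‖ ^ 2 ↔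
      ‖q - a‖ < ‖x - a‖ := by
  have hqx : 0 < ‖q - x‖ ^ 2 := by positivity [sub_ne_zero.2 hxq.symm]
  rw [div_norm_sub_sq_add_smul_sub_eq hxq, lt_add_iff_pos_right, div_pos_iff_of_pos_right hqx,
    mul_pos_iff_of_pos_left (sub_pos.2 ht), sub_pos, pow_lt_pow_iff_left₀ (norm_nonneg _)
    (norm_nonneg _) two_ne_zero]

end

/-- Euclidean sagitta inequalities inside and outside the circle (`k = 0` case):
if `‖q − a‖ = r`, `p = a + t(q − a)` with `t ∈ [−1,1)`, then the ratio
`(‖p − x‖² − ‖p − q‖²)/‖q − x‖²` is `< (r − ‖p − q‖)/r` for `x ≠ q` strictly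
inside the ball, and `> (r − ‖p − q‖)/r` for `x` strictly outside. -/
theorem euclidean_sagitta_inequalities {E : Type*} [NormedAddCommGroup E]
    [InnerProductSpace ℝ E] (a q : E) (r : ℝ) (hr : 0 < r) (hq : ‖q - a‖ = r)
    (t : ℝ) (ht : t ∈ Set.Ico (-1 : ℝ) 1) (p : E) (hp : p = a + t • (q - a)) :
    (∀ x : E, ‖x - a‖ < r → x ≠ q →
      (‖p - x‖ ^ 2 - ‖p - q‖ ^ 2) / ‖q - x‖ ^ 2 < (r - ‖p - q‖) / r) ∧
    (∀ x : E, r < ‖x - a‖ →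
      (r - ‖p - q‖) / r < (‖p - x‖ ^ 2 - ‖p - q‖ ^ 2) / ‖q - x‖ ^ 2) := by
  subst hp
  have hrhs : (r - ‖a + t • (q - a) - q‖) / r = t := by
    rw [norm_add_smul_sub_sub_right ht.2.le, hq]
    field_simp
    ring
  rw [hrhs]
  refine ⟨fun x hx hxq => ?_, fun x hx => ?_⟩
  · exact (div_norm_sub_sq_add_smul_sub_lt_iff hxq ht.2).2 (hq ▸ hx)
  · have hxq : x ≠ q := by
      rintro rfl
      exact hx.ne' hq
    exact (lt_div_norm_sub_sq_add_smul_sub_iff hxq ht.2).2 (hq ▸ hx)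
end

section
/- Disk characterization by eccentricity ratio (Euclidean case): let E be a real inner product space, let p, q ∈ E with p ≠ q, and let λ < 1 be a real number. Set R = ‖p − q‖/(1 − λ) and a = q + (1/(1 − λ))·(p − q). Then q lies on the sphere of radius R about a, and for every x ∈ E with x ≠ q: ‖x − a‖ ≤ R if and only if (‖p − x‖² − ‖p − q‖²)/‖q − x‖² ≤ λ. Moreover, if λ ≥ −1 then ‖p − a‖ ≤ R (i.e. p lies in the closed ball). -/
/-!
With `s = 1 - λ > 0`, `u = p - q` and `v = x - q`, both conditions reduce to the same
inequality `s ‖v‖² ≤ 2 ⟪v, u⟫`: expanding `‖v - s⁻¹ u‖² ≤ ‖s⁻¹ u‖²` for the ball, and the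
law of cosines `‖u - v‖² - ‖u‖² = ‖v‖² - 2 ⟪v, u⟫` for the ratio. Taking `x = p` in the
ball criterion gives `s ‖u‖² ≤ 2 ‖u‖²`, which holds as soon as `λ ≥ -1`.
-/

open scoped RealInnerProductSpace

section

variable {E : Type*} [NormedAddCommGroup E] [InnerProductSpace ℝ E]

theorem norm_sub_inv_smul_le_div_iff {s : ℝ} (hs : 0 < s) (u v : E) :
    ‖v - s⁻¹ • u‖ ≤ ‖u‖ / s ↔ s * ‖v‖ ^ 2 ≤ 2 * ⟪v, u⟫ := by
  have hexpand : ‖v - s⁻¹ • u‖ ^ 2 = ‖v‖ ^ 2 - 2 * ⟪v, u⟫ / s + (‖u‖ / s) ^ 2 := by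
    rw [norm_sub_sq_real, real_inner_smul_right, norm_smul, Real.norm_of_nonneg (by positivity)]
    ring
  rw [← pow_le_pow_iff_left₀ (norm_nonneg _) (by positivity) two_ne_zero, hexpand,
    add_le_iff_nonpos_left, sub_nonpos, le_div_iff₀' hs]

theorem norm_sub_sq_sub_norm_sub_sq (p q x : E) :
    ‖p - x‖ ^ 2 - ‖p - q‖ ^ 2 = ‖x - q‖ ^ 2 - 2 * ⟪x - q, p - q⟫ := by
  rw [show p - x = (p - q) - (x - q) by abel, norm_sub_sq_real, real_inner_comm]
  ring

theorem eccentricity_ratio_le_iff {p q x : E} (hx : x ≠ q) (lam : ℝ) :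
    (‖p - x‖ ^ 2 - ‖p - q‖ ^ 2) / ‖q - x‖ ^ 2 ≤ lam ↔
      (1 - lam) * ‖x - q‖ ^ 2 ≤ 2 * ⟪x - q, p - q⟫ := by
  have hpos : 0 < ‖x - q‖ ^ 2 := pow_pos (norm_pos_iff.2 (sub_ne_zero.2 hx)) 2
  rw [norm_sub_rev q x, div_le_iff₀ hpos, norm_sub_sq_sub_norm_sub_sq]
  constructor <;> intro h <;> linarith

end

theorem disk_characterization_general {E : Type*} [NormedAddCommGroup E]
    [InnerProductSpace ℝ E] (p q : E) (lam : ℝ) (hlam : lam < 1)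
    (R : ℝ) (hR : R = ‖p - q‖ / (1 - lam))
    (a : E) (ha : a = q + (1 / (1 - lam)) • (p - q)) :
    ‖q - a‖ = R ∧
    (∀ x : E, x ≠ q →
      (‖x - a‖ ≤ R ↔ (‖p - x‖ ^ 2 - ‖p - q‖ ^ 2) / ‖q - x‖ ^ 2 ≤ lam)) ∧
    (-1 ≤ lam → ‖p - a‖ ≤ R) := by
  have hs : 0 < 1 - lam := by linarith
  have hball (x : E) : ‖x - a‖ ≤ R ↔ (1 - lam) * ‖x - q‖ ^ 2 ≤ 2 * ⟪x - q, p - q⟫ := by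
    rw [hR, ← norm_sub_inv_smul_le_div_iff hs, ha, one_div, sub_add_eq_sub_sub]
  refine ⟨?_, fun x hx => (hball x).trans (eccentricity_ratio_le_iff hx lam).symm, fun hl => ?_⟩
  · rw [ha, hR, sub_add_cancel_left, norm_neg, norm_smul, Real.norm_of_nonneg (by positivity)]
    ring
  · rw [hball, real_inner_self_eq_norm_sq]
    exact mul_le_mul_of_nonneg_right (by linarith) (sq_nonneg _)

/-- Disk characterization by eccentricity ratio (Euclidean case): for `p ≠ q` and
`λ < 1`, with `R = ‖p − q‖/(1 − λ)` and `a = q + (1/(1 − λ))(p − q)`, the point `q`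
lies on the sphere of radius `R` about `a`; a point `x ≠ q` lies in the closed ball
iff the eccentricity ratio is `≤ λ`; and if `λ ≥ −1` then `p` lies in the closed
ball. -/
theorem disk_characterization {E : Type*} [NormedAddCommGroup E]
    [InnerProductSpace ℝ E] (p q : E) (hpq : p ≠ q) (lam : ℝ) (hlam : lam < 1)
    (R : ℝ) (hR : R = ‖p - q‖ / (1 - lam))
    (a : E) (ha : a = q + (1 / (1 - lam)) • (p - q)) :
    ‖q - a‖ = R ∧
    (∀ x : E, x ≠ q →
      (‖x - a‖ ≤ R ↔ (‖p - x‖ ^ 2 - ‖p - q‖ ^ 2) / ‖q - x‖ ^ 2 ≤ lam)) ∧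
    (-1 ≤ lam → ‖p - a‖ ≤ R) :=
  disk_characterization_general p q lam hlam R hR a ha
end

section
/- Spherical sagitta identity on the boundary circle (k = 1 case of Proposition 1.2, part 1): let E be a real inner product space and let a, u ∈ E be unit vectors with ⟨a,u⟩ = 0. Let r ∈ (0, π/2] and h ∈ [0, 2r], and set p = cos(r − h)·a + sin(r − h)·u and q = cos r·a + sin r·u (so p and q are unit vectors on the geodesic through a in direction u, with ⟨p,q⟩ = cos h, d(a,q) = r and d(a,p) = |r − h| ≤ r). Then for every unit vector x ∈ E with ⟨a,x⟩ = cos r and x ≠ q, (⟨p,q⟩ − ⟨p,x⟩) / (1 − ⟨q,x⟩) = sin(r − h)/sin r. -/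
open scoped RealInnerProductSpace

/-!
Write `p = cos(r - h) a + sin(r - h) u` and `q = cos r a + sin r u`. Since `x` and `q` have the
same component `cos r` along `a`, pairing with `p` or with `q` only sees their difference along
`u`: with `δ = ⟪u, q⟫ - ⟪u, x⟫` we get `⟪p, q⟫ - ⟪p, x⟫ = sin(r - h) δ` and, as `q` is a unit
vector, `1 - ⟪q, x⟫ = ⟪q, q⟫ - ⟪q, x⟫ = sin r δ`. The factor `δ` cancels because `x ≠ q` forces
`⟪q, x⟫ ≠ 1`.
-/

section

variable {E : Type*} [NormedAddCommGroup E] [InnerProductSpace ℝ E]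

theorem inner_cos_smul_add_sin_smul_sub_inner (a u y z : E) (θ : ℝ) (hyz : ⟪a, y⟫ = ⟪a, z⟫) :
    ⟪Real.cos θ • a + Real.sin θ • u, y⟫ - ⟪Real.cos θ • a + Real.sin θ • u, z⟫ =
      Real.sin θ * (⟪u, y⟫ - ⟪u, z⟫) := by
  simp only [inner_add_left, real_inner_smul_left, hyz]
  ring

theorem inner_cos_smul_add_sin_smul_right {a u : E} (ha : ‖a‖ = 1) (hau : ⟪a, u⟫ = 0) (θ : ℝ) :
    ⟪a, Real.cos θ • a + Real.sin θ • u⟫ = Real.cos θ := by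
  simp [inner_add_right, real_inner_smul_right, hau, ha]

theorem norm_cos_smul_add_sin_smul {a u : E} (ha : ‖a‖ = 1) (hu : ‖u‖ = 1) (hau : ⟪a, u⟫ = 0)
    (θ : ℝ) : ‖Real.cos θ • a + Real.sin θ • u‖ = 1 := by
  have hpyth := norm_add_sq_eq_norm_sq_add_norm_sq_real
    (by simp [real_inner_smul_left, real_inner_smul_right, hau] :
      ⟪Real.cos θ • a, Real.sin θ • u⟫ = 0)
  simp only [norm_smul, Real.norm_eq_abs, ha, hu, mul_one] at hpyth
  rw [← pow_eq_one_iff_of_nonneg (norm_nonneg _) two_ne_zero]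
  nlinarith [sq_abs (Real.cos θ), sq_abs (Real.sin θ), Real.cos_sq_add_sin_sq θ]

end

theorem spherical_sagitta_identity_general {E : Type*} [NormedAddCommGroup E]
    [InnerProductSpace ℝ E] (a u : E) (ha : ‖a‖ = 1) (hu : ‖u‖ = 1)
    (hau : ⟪a, u⟫ = 0) (r h : ℝ) (p q : E)
    (hp : p = Real.cos (r - h) • a + Real.sin (r - h) • u)
    (hq : q = Real.cos r • a + Real.sin r • u)
    (x : E) (hx : ‖x‖ = 1) (hax : ⟪a, x⟫ = Real.cos r) (hxq : x ≠ q) :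
    (⟪p, q⟫ - ⟪p, x⟫) / (1 - ⟪q, x⟫) = Real.sin (r - h) / Real.sin r := by
  have hq_norm : ‖q‖ = 1 := hq ▸ norm_cos_smul_add_sin_smul ha hu hau r
  have haq : ⟪a, q⟫ = ⟪a, x⟫ := by
    rw [hax, hq, inner_cos_smul_add_sin_smul_right ha hau]
  have hnum := inner_cos_smul_add_sin_smul_sub_inner a u q x (r - h) haq
  have hden := inner_cos_smul_add_sin_smul_sub_inner a u q x r haq
  rw [← hp] at hnum
  rw [← hq, inner_self_eq_one_of_norm_eq_one hq_norm] at hden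
  have hden_ne : 1 - ⟪q, x⟫ ≠ 0 :=
    sub_ne_zero.mpr fun h1 ↦ hxq ((inner_eq_one_iff_of_norm_eq_one hq_norm hx).mp h1.symm).symm
  rw [hden] at hden_ne
  rw [hnum, hden, mul_div_mul_right _ _ (right_ne_zero_of_mul hden_ne)]

/-- Spherical sagitta identity on the boundary circle (`k = 1` case): with `a, u`
orthonormal, `r ∈ (0, π/2]`, `h ∈ [0, 2r]`, `p = cos(r − h)a + sin(r − h)u`,
`q = cos r·a + sin r·u`, every unit vector `x` with `⟪a,x⟫ = cos r` and `x ≠ q`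
satisfies `(⟪p,q⟫ − ⟪p,x⟫)/(1 − ⟪q,x⟫) = sin(r − h)/sin r`. -/
theorem spherical_sagitta_identity {E : Type*} [NormedAddCommGroup E]
    [InnerProductSpace ℝ E] (a u : E) (ha : ‖a‖ = 1) (hu : ‖u‖ = 1)
    (hau : ⟪a, u⟫ = 0) (r h : ℝ) (hr : r ∈ Set.Ioc 0 (Real.pi / 2))
    (hh : h ∈ Set.Icc 0 (2 * r)) (p q : E)
    (hp : p = Real.cos (r - h) • a + Real.sin (r - h) • u)
    (hq : q = Real.cos r • a + Real.sin r • u)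
    (x : E) (hx : ‖x‖ = 1) (hax : ⟪a, x⟫ = Real.cos r) (hxq : x ≠ q) :
    (⟪p, q⟫ - ⟪p, x⟫) / (1 - ⟪q, x⟫) = Real.sin (r - h) / Real.sin r :=
  spherical_sagitta_identity_general a u ha hu hau r h p q hp hq x hx hax hxq
end

section
/- Existence and uniqueness of the critical radius r_λ for k > 0: let k > 0, h ∈ (0, π/√k), and λ ∈ ℝ. Then there exists a unique r ∈ (0, π/√k) such that sin(√k·(r − h)) = λ · sin(√k·r), i.e. such that m_k'(r − h)/m_k'(r) = λ. -/
/-! Substituting `x = √k r` and `s = √k h`, both in `(0, π)`, the equation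
`sin (x - s) = λ sin x` is equivalent to `cot x = (cos s - λ) / sin s`, and `cot` maps `(0, π)`
bijectively onto `ℝ`. -/

open Real Set

lemma Real.cos_div_sin_eq_tan_pi_div_two_sub (x : ℝ) : cos x / sin x = tan (π / 2 - x) := by
  rw [tan_eq_sin_div_cos, sin_pi_div_two_sub, cos_pi_div_two_sub]

lemma Real.existsUnique_cos_div_sin_eq (c : ℝ) : ∃! x, x ∈ Ioo 0 π ∧ cos x / sin x = c := by
  refine ⟨π / 2 - arctan c, ⟨⟨?_, ?_⟩, ?_⟩, ?_⟩
  · linarith [arctan_lt_pi_div_two c]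
  · linarith [neg_pi_div_two_lt_arctan c]
  · rw [cos_div_sin_eq_tan_pi_div_two_sub, sub_sub_cancel, tan_arctan]
  · rintro x ⟨⟨hx0, hxπ⟩, rfl⟩
    rw [cos_div_sin_eq_tan_pi_div_two_sub, arctan_tan] <;> linarith

lemma Real.sin_sub_eq_mul_sin_iff {x s : ℝ} (hx : sin x ≠ 0) (hs : sin s ≠ 0) (l : ℝ) :
    sin (x - s) = l * sin x ↔ cos x / sin x = (cos s - l) / sin s := by
  rw [div_eq_div_iff hx hs, sin_sub]
  constructor <;> intro H <;> linear_combination -H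

theorem Real.existsUnique_sin_sub_eq_mul_sin {s : ℝ} (hs : s ∈ Ioo 0 π) (l : ℝ) :
    ∃! x, x ∈ Ioo 0 π ∧ sin (x - s) = l * sin x := by
  refine (existsUnique_congr fun x => and_congr_right fun hx => ?_).mpr
    (existsUnique_cos_div_sin_eq ((cos s - l) / sin s))
  exact sin_sub_eq_mul_sin_iff (sin_pos_of_pos_of_lt_pi hx.1 hx.2).ne'
    (sin_pos_of_pos_of_lt_pi hs.1 hs.2).ne' l

lemma existsUnique_mem_Ioo_div_of_existsUnique {a b : ℝ} (ha : 0 < a) {p : ℝ → Prop}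
    (h : ∃! x, x ∈ Ioo 0 b ∧ p x) : ∃! r, r ∈ Ioo 0 (b / a) ∧ p (a * r) := by
  obtain ⟨x, ⟨hx, hpx⟩, hu⟩ := h
  refine ⟨x / a, ⟨⟨div_pos hx.1 ha, div_lt_div_of_pos_right hx.2 ha⟩, ?_⟩, ?_⟩
  · rwa [mul_div_cancel₀ _ ha.ne']
  · rintro r ⟨hr, hpr⟩
    rw [← hu (a * r) ⟨⟨mul_pos ha hr.1, (lt_div_iff₀' ha).mp hr.2⟩, hpr⟩,
      mul_div_cancel_left₀ _ ha.ne']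

/-- Existence and uniqueness of the critical radius `r_λ` for `k > 0`: for
`h ∈ (0, π/√k)` and any `λ ∈ ℝ`, there is a unique `r ∈ (0, π/√k)` with
`sin(√k(r − h)) = λ sin(√k r)`, i.e. `m_k'(r − h)/m_k'(r) = λ`. -/
theorem critical_radius_pos (k h lam : ℝ) (hk : 0 < k)
    (hh : h ∈ Set.Ioo 0 (Real.pi / Real.sqrt k)) :
    ∃! r : ℝ, r ∈ Set.Ioo 0 (Real.pi / Real.sqrt k) ∧
      Real.sin (Real.sqrt k * (r - h)) = lam * Real.sin (Real.sqrt k * r) := by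
  have ha : 0 < √k := sqrt_pos.mpr hk
  have hs : √k * h ∈ Ioo 0 π := ⟨mul_pos ha hh.1, (lt_div_iff₀' ha).mp hh.2⟩
  simp_rw [mul_sub]
  exact existsUnique_mem_Ioo_div_of_existsUnique ha (existsUnique_sin_sub_eq_mul_sin hs lam)
end

section
/- Existence and uniqueness of the critical radius r_λ for k < 0: let k < 0, h > 0, write c = √(−k), and let λ be a real number with λ < e^{−c·h}. Then there exists a unique r ∈ (0, ∞) such that sinh(c·(r − h)) = λ · sinh(c·r), i.e. such that m_k'(r − h)/m_k'(r) = λ. -/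
/-!
Multiplying by `2 e^{c r}` turns `sinh (c (r - h)) = λ sinh (c r)` into
`e^{2 c r} (e^{-c h} - λ) = e^{c h} - λ`. Since `λ < e^{-c h} < e^{c h}`, this says that
`e^{2 c r}` equals a fixed number larger than `1`, which happens for exactly one `r > 0`.
-/

open Real

lemma Real.sinh_sub_eq_mul_sinh_iff (a b lam : ℝ) :
    sinh (a - b) = lam * sinh a ↔ exp (2 * a) * (exp (-b) - lam) = exp b - lam := by
  have hexp : exp (2 * a) = exp a * exp a := by rw [← exp_add]; ring_nf
  have hsub : exp (a - b) = exp a * exp (-b) := by rw [← exp_add]; ring_nf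
  have hneg : exp (-(a - b)) = (exp a)⁻¹ * exp b := by
    rw [← exp_neg, ← exp_add]; ring_nf
  have ha : exp a ≠ 0 := (exp_pos a).ne'
  rw [sinh_eq, sinh_eq, hsub, hneg, exp_neg a, hexp]
  constructor <;> intro h
  · field_simp at h; linear_combination h
  · field_simp; linear_combination h

lemma Real.existsUnique_pos_exp_mul_eq {c q : ℝ} (hc : 0 < c) (hq : 1 < q) :
    ∃! r : ℝ, r ∈ Set.Ioi (0 : ℝ) ∧ exp (c * r) = q := by
  refine ⟨log q / c, ⟨div_pos (log_pos hq) hc, ?_⟩, ?_⟩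
  · rw [mul_div_cancel₀ _ hc.ne', exp_log (by linarith)]
  · rintro r ⟨-, hr⟩
    rw [eq_div_iff hc.ne', ← hr, log_exp, mul_comm]

/-- Existence and uniqueness of the critical radius `r_λ` for `k < 0`: with
`c = √(−k)`, `h > 0`, and `λ < e^{−c h}`, there is a unique `r ∈ (0, ∞)` with
`sinh(c(r − h)) = λ sinh(c r)`, i.e. `m_k'(r − h)/m_k'(r) = λ`. -/
theorem critical_radius_neg (k h lam : ℝ) (hk : k < 0) (hh : 0 < h)
    (hlam : lam < Real.exp (-(Real.sqrt (-k) * h))) :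
    ∃! r : ℝ, r ∈ Set.Ioi (0 : ℝ) ∧
      Real.sinh (Real.sqrt (-k) * (r - h)) = lam * Real.sinh (Real.sqrt (-k) * r) := by
  set c := Real.sqrt (-k)
  have hc : 0 < c := Real.sqrt_pos.mpr (by linarith)
  have hA : 0 < exp (-(c * h)) - lam := by linarith
  have hAB : exp (-(c * h)) - lam < exp (c * h) - lam := by
    have : exp (-(c * h)) < exp (c * h) := exp_lt_exp.mpr (neg_lt_self (mul_pos hc hh))
    linarith
  have hequiv : ∀ r, sinh (c * (r - h)) = lam * sinh (c * r) ↔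
      exp ((2 * c) * r) = (exp (c * h) - lam) / (exp (-(c * h)) - lam) := fun r => by
    rw [mul_sub, sinh_sub_eq_mul_sinh_iff, eq_div_iff hA.ne', mul_assoc]
  simp only [hequiv]
  exact existsUnique_pos_exp_mul_eq (by linarith) ((one_lt_div hA).mpr hAB)
end
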